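/- arXiv:1201.4497 — 3 statements merged into one kernel-verified Lean document; each statement's English description precedes it below -/
import Mathlib

section
/- Let s : ℝ³ → ℝ³ be a screw with resultant s⃗ ≠ 0, let A ∈ ℝ³ be any point, and set Q := A + (s⃗ × s(A))/(s⃗ · s⃗). Then every point R on the line through Q with direction s⃗ satisfies s(R) = 𝓈, where 𝓈 := ((s(A) · s⃗)/(s⃗ · s⃗)) s⃗ is the vector invariant of s, and for every P ∈ ℝ³ one has s(P) = 𝓈 + s⃗ × (P − Q). -/
set_option autoImplicit false

open Matrix

/-- A screw is a vector field on `ℝ³` satisfying the constitutive equation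
with resultant `r`. -/
def IsScrewWith (s : (Fin 3 → ℝ) → (Fin 3 → ℝ)) (r : Fin 3 → ℝ) : Prop :=
  ∀ P Q : Fin 3 → ℝ, s P - s Q = r ⨯₃ (P - Q)

/-! The point `Q = A + (r × s(A))/(r·r)` is chosen so that `r × (Q - A)` cancels the component of
`s(A)` orthogonal to `r`, by the expansion `r × (r × v) = (r·v) r - (r·r) v`. Thus `s(Q)` is the
projection of `s(A)` onto `r`, i.e. the vector invariant, and `s` is constant along lines of
direction `r` since `r × r = 0`. -/

namespace IsScrewWith

variable {s : (Fin 3 → ℝ) → (Fin 3 → ℝ)} {r : Fin 3 → ℝ}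

theorem apply_eq_add_cross (hs : IsScrewWith s r) (P Q : Fin 3 → ℝ) :
    s P = s Q + r ⨯₃ (P - Q) := by
  rw [← hs P Q, add_sub_cancel]

theorem apply_add_smul (hs : IsScrewWith s r) (Q : Fin 3 → ℝ) (t : ℝ) :
    s (Q + t • r) = s Q := by
  rw [hs.apply_eq_add_cross _ Q, add_sub_cancel_left, map_smul, cross_self, smul_zero, add_zero]

theorem apply_add_cross_eq_smul (hs : IsScrewWith s r) (hr : r ⬝ᵥ r ≠ 0) (A : Fin 3 → ℝ) :
    s (A + (r ⬝ᵥ r)⁻¹ • (r ⨯₃ s A)) = ((s A ⬝ᵥ r) / (r ⬝ᵥ r)) • r := by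
  rw [hs.apply_eq_add_cross _ A, add_sub_cancel_left, map_smul, cross_cross_eq_smul_sub_smul',
    smul_sub, smul_smul, smul_smul, inv_mul_cancel₀ hr, one_smul, add_sub_cancel,
    dotProduct_comm (s A) r, div_eq_inv_mul]

end IsScrewWith

/-- Given a screw `s` with resultant `r ≠ 0` and any point `A`, setting
`Q := A + (r × s(A))/(r·r)`, every point on the line through `Q` with
direction `r` has screw field equal to the vector invariant
`𝓈 = ((s(A)·r)/(r·r)) r`, and `s(P) = 𝓈 + r × (P − Q)` for every `P`. -/
theorem screw_axis_exists (s : (Fin 3 → ℝ) → (Fin 3 → ℝ)) (r : Fin 3 → ℝ)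
    (hs : IsScrewWith s r) (hr : r ≠ 0) (A : Fin 3 → ℝ)
    (Q : Fin 3 → ℝ) (hQ : Q = A + (r ⬝ᵥ r)⁻¹ • (r ⨯₃ s A))
    (𝓈 : Fin 3 → ℝ) (h𝓈 : 𝓈 = ((s A ⬝ᵥ r) / (r ⬝ᵥ r)) • r) :
    (∀ t : ℝ, s (Q + t • r) = 𝓈) ∧
    (∀ P : Fin 3 → ℝ, s P = 𝓈 + r ⨯₃ (P - Q)) := by
  have hrr : r ⬝ᵥ r ≠ 0 := mt dotProduct_self_eq_zero.mp hr
  have hsQ : s Q = 𝓈 := by rw [hQ, h𝓈, hs.apply_add_cross_eq_smul hrr]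
  refine ⟨fun t => ?_, fun P => ?_⟩
  · rw [hs.apply_add_smul, hsQ]
  · rw [← hsQ, hs.apply_eq_add_cross P Q]
end

section
/- Let s : ℝ³ → ℝ³ be a screw with resultant s⃗ ≠ 0 and vector invariant 𝓈, and let Q ∈ ℝ³ satisfy s(Q) = 𝓈. Then for every P ∈ ℝ³ one has ‖s(Q)‖ ≤ ‖s(P)‖; that is, the screw field attains its minimum norm precisely on the screw axis, where it equals the vector invariant. -/
set_option autoImplicit false

open Matrix

/-- The Euclidean norm of a vector of `ℝ³`. -/
noncomputable def enorm3 (v : Fin 3 → ℝ) : ℝ := Real.sqrt (v ⬝ᵥ v)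

theorem dotProduct_add_self_of_dotProduct_eq_zero {n R : Type*} [Fintype n] [CommRing R]
    {a b : n → R} (h : a ⬝ᵥ b = 0) : (a + b) ⬝ᵥ (a + b) = a ⬝ᵥ a + b ⬝ᵥ b := by
  rw [add_dotProduct, dotProduct_add, dotProduct_add, h, dotProduct_comm b a, h]
  ring

theorem enorm3_le_enorm3_add_of_dotProduct_eq_zero {a b : Fin 3 → ℝ} (h : a ⬝ᵥ b = 0) :
    enorm3 a ≤ enorm3 (a + b) := by
  unfold enorm3
  rw [dotProduct_add_self_of_dotProduct_eq_zero h]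
  exact Real.sqrt_le_sqrt (le_add_of_nonneg_right (dotProduct_self_star_nonneg b))

theorem smul_dotProduct_cross_eq_zero {R : Type*} [CommRing R] (c : R) (r v : Fin 3 → R) :
    (c • r) ⬝ᵥ (r ⨯₃ v) = 0 := by
  rw [smul_dotProduct, dot_self_cross, smul_zero]

theorem IsScrewWith.apply_eq_add_cross_s7 {s : (Fin 3 → ℝ) → (Fin 3 → ℝ)} {r : Fin 3 → ℝ}
    (hs : IsScrewWith s r) (P Q : Fin 3 → ℝ) : s P = s Q + r ⨯₃ (P - Q) := by
  rw [← hs P Q, add_sub_cancel]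

theorem screw_axis_min_norm_general (s : (Fin 3 → ℝ) → (Fin 3 → ℝ)) (r : Fin 3 → ℝ)
    (hs : IsScrewWith s r) (Q : Fin 3 → ℝ)
    (𝓈 : Fin 3 → ℝ) (h𝓈 : 𝓈 = ((s Q ⬝ᵥ r) / (r ⬝ᵥ r)) • r)
    (hQ : s Q = 𝓈) :
    ∀ P : Fin 3 → ℝ, enorm3 (s Q) ≤ enorm3 (s P) := by
  intro P
  have h_orth : s Q ⬝ᵥ r ⨯₃ (P - Q) = 0 := by
    rw [hQ, h𝓈]
    exact smul_dotProduct_cross_eq_zero _ r (P - Q)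
  rw [hs.apply_eq_add_cross_s7 P Q]
  exact enorm3_le_enorm3_add_of_dotProduct_eq_zero h_orth

/-- On the screw axis the screw field has minimal Euclidean norm: if
`s(Q)` equals the vector invariant `𝓈` then `‖s(Q)‖ ≤ ‖s(P)‖` for all `P`. -/
theorem screw_axis_min_norm (s : (Fin 3 → ℝ) → (Fin 3 → ℝ)) (r : Fin 3 → ℝ)
    (hs : IsScrewWith s r) (hr : r ≠ 0) (Q : Fin 3 → ℝ)
    (𝓈 : Fin 3 → ℝ) (h𝓈 : 𝓈 = ((s Q ⬝ᵥ r) / (r ⬝ᵥ r)) • r)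
    (hQ : s Q = 𝓈) :
    ∀ P : Fin 3 → ℝ, enorm3 (s Q) ≤ enorm3 (s P) :=
  screw_axis_min_norm_general s r hs Q 𝓈 h𝓈 hQ
end

section
/- Let s₁, s₂, s₃ : ℝ³ → ℝ³ be screws with resultants s⃗₁, s⃗₂, s⃗₃. Then ⟨s₁, [s₃, s₂]⟩ + ⟨[s₃, s₁], s₂⟩ = 0, where for screws a, b with resultants a⃗, b⃗ the screw scalar product is ⟨a, b⟩ := a⃗ · b(P) + b⃗ · a(P) (independent of P), and the commutator of screws a, b is the screw [a, b](P) := b⃗ × a(P) − a⃗ × b(P) (a screw with resultant −(a⃗ × b⃗)). Moreover, for every P ∈ ℝ³ one has ⟨s₁, [s₃, s₂]⟩ = s₃(P) · (s⃗₁ × s⃗₂) + s₂(P) · (s⃗₃ × s⃗₁) + s₁(P) · (s⃗₂ × s⃗₃), an expression independent of P and invariant under cyclic permutation of (s₁, s₂, s₃). -/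
/-!
Everything except the independence of the point holds pointwise for arbitrary vector fields and
follows from the cyclic symmetry and antisymmetry of the triple product. For screws, moving from `P`
to `Q` adds the terms `(rᵢ × (Q - P)) ⬝ (rⱼ × rₖ)`, whose cyclic sum vanishes once each term is
expanded by the Binet–Cauchy identity.
-/

set_option autoImplicit false

open Matrix

/-- The commutator of two screws `a, b` (with resultants `a⃗, b⃗`):
the screw `P ↦ b⃗ × a(P) − a⃗ × b(P)`, whose resultant is `−(a⃗ × b⃗)`. -/
def screwComm (a b : (Fin 3 → ℝ) → (Fin 3 → ℝ)) (ra rb : Fin 3 → ℝ) :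
    (Fin 3 → ℝ) → (Fin 3 → ℝ) :=
  fun P => rb ⨯₃ a P - ra ⨯₃ b P

/-- The screw scalar product of screws `a, b` with resultants `ra, rb`,
evaluated at the point `P` (it is in fact independent of `P`). -/
def screwProdAt (a b : (Fin 3 → ℝ) → (Fin 3 → ℝ)) (ra rb : Fin 3 → ℝ)
    (P : Fin 3 → ℝ) : ℝ :=
  ra ⬝ᵥ b P + rb ⬝ᵥ a P

theorem cross_dot_cross_cyclic_sum_eq_zero {R : Type*} [CommRing R] (u v w d : Fin 3 → R) :
    (w ⨯₃ d) ⬝ᵥ (u ⨯₃ v) + (v ⨯₃ d) ⬝ᵥ (w ⨯₃ u) + (u ⨯₃ d) ⬝ᵥ (v ⨯₃ w) = 0 := by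
  simp only [cross_dot_cross]
  simp only [dotProduct_comm d, dotProduct_comm v u, dotProduct_comm w u, dotProduct_comm w v]
  ring

theorem IsScrewWith.apply_eq {s : (Fin 3 → ℝ) → (Fin 3 → ℝ)} {r : Fin 3 → ℝ}
    (h : IsScrewWith s r) (P Q : Fin 3 → ℝ) : s Q = s P + r ⨯₃ (Q - P) :=
  eq_add_of_sub_eq' (h Q P)

section ScrewProduct

variable (a b c : (Fin 3 → ℝ) → (Fin 3 → ℝ)) (ra rb rc P : Fin 3 → ℝ)

theorem screwProdAt_comm : screwProdAt a b ra rb P = screwProdAt b a rb ra P :=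
  add_comm _ _

theorem screwProdAt_screwComm :
    screwProdAt a (screwComm c b rc rb) ra (-(rc ⨯₃ rb)) P =
      c P ⬝ᵥ (ra ⨯₃ rb) + b P ⬝ᵥ (rc ⨯₃ ra) + a P ⬝ᵥ (rb ⨯₃ rc) := by
  have hc : ra ⬝ᵥ rb ⨯₃ c P = c P ⬝ᵥ ra ⨯₃ rb :=
    (triple_product_permutation ..).trans (triple_product_permutation ..)
  have hb : ra ⬝ᵥ rc ⨯₃ b P = -(b P ⬝ᵥ rc ⨯₃ ra) := by
    rw [triple_product_permutation, triple_product_permutation, ← dotProduct_neg, cross_anticomm]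
  have ha : -(rc ⨯₃ rb) ⬝ᵥ a P = a P ⬝ᵥ rb ⨯₃ rc := by
    rw [cross_anticomm, dotProduct_comm]
  simp only [screwProdAt, screwComm, dotProduct_sub, hc, hb, ha]
  ring

theorem screwProdAt_screwComm_add_screwProdAt_screwComm :
    screwProdAt a (screwComm c b rc rb) ra (-(rc ⨯₃ rb)) P +
      screwProdAt (screwComm c a rc ra) b (-(rc ⨯₃ ra)) rb P = 0 := by
  rw [screwProdAt_comm (screwComm c a rc ra), screwProdAt_screwComm, screwProdAt_screwComm,
    ← cross_anticomm ra rb, ← cross_anticomm rc ra, ← cross_anticomm rb rc]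
  simp only [dotProduct_neg]
  ring

end ScrewProduct

theorem IsScrewWith.dot_cross_cyclic_sum_eq {s₁ s₂ s₃ : (Fin 3 → ℝ) → (Fin 3 → ℝ)} {r₁ r₂ r₃ : Fin 3 → ℝ}
    (h₁ : IsScrewWith s₁ r₁) (h₂ : IsScrewWith s₂ r₂) (h₃ : IsScrewWith s₃ r₃) (P Q : Fin 3 → ℝ) :
    s₃ P ⬝ᵥ (r₁ ⨯₃ r₂) + s₂ P ⬝ᵥ (r₃ ⨯₃ r₁) + s₁ P ⬝ᵥ (r₂ ⨯₃ r₃) =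
      s₃ Q ⬝ᵥ (r₁ ⨯₃ r₂) + s₂ Q ⬝ᵥ (r₃ ⨯₃ r₁) + s₁ Q ⬝ᵥ (r₂ ⨯₃ r₃) := by
  rw [h₁.apply_eq P Q, h₂.apply_eq P Q, h₃.apply_eq P Q]
  simp only [add_dotProduct]
  linear_combination -cross_dot_cross_cyclic_sum_eq_zero r₁ r₂ r₃ (Q - P)

/-- Invariance of the screw scalar product:
`⟨s₁,[s₃,s₂]⟩ + ⟨[s₃,s₁],s₂⟩ = 0`; moreover `⟨s₁,[s₃,s₂]⟩` equals
`s₃(P)·(r₁×r₂) + s₂(P)·(r₃×r₁) + s₁(P)·(r₂×r₃)`, an expression independent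
of `P` and invariant under cyclic permutation of `(s₁,s₂,s₃)`. -/
theorem screw_product_invariance (s₁ s₂ s₃ : (Fin 3 → ℝ) → (Fin 3 → ℝ))
    (r₁ r₂ r₃ : Fin 3 → ℝ)
    (h₁ : IsScrewWith s₁ r₁) (h₂ : IsScrewWith s₂ r₂) (h₃ : IsScrewWith s₃ r₃) :
    ∀ P : Fin 3 → ℝ,
      -- ⟨s₁, [s₃,s₂]⟩ + ⟨[s₃,s₁], s₂⟩ = 0
      (screwProdAt s₁ (screwComm s₃ s₂ r₃ r₂) r₁ (-(r₃ ⨯₃ r₂)) P +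
        screwProdAt (screwComm s₃ s₁ r₃ r₁) s₂ (-(r₃ ⨯₃ r₁)) r₂ P = 0) ∧
      -- explicit expression for ⟨s₁, [s₃,s₂]⟩
      (screwProdAt s₁ (screwComm s₃ s₂ r₃ r₂) r₁ (-(r₃ ⨯₃ r₂)) P =
        s₃ P ⬝ᵥ (r₁ ⨯₃ r₂) + s₂ P ⬝ᵥ (r₃ ⨯₃ r₁) + s₁ P ⬝ᵥ (r₂ ⨯₃ r₃)) ∧
      -- independence of the point
      (∀ Q : Fin 3 → ℝ,
        s₃ P ⬝ᵥ (r₁ ⨯₃ r₂) + s₂ P ⬝ᵥ (r₃ ⨯₃ r₁) + s₁ P ⬝ᵥ (r₂ ⨯₃ r₃) =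
        s₃ Q ⬝ᵥ (r₁ ⨯₃ r₂) + s₂ Q ⬝ᵥ (r₃ ⨯₃ r₁) + s₁ Q ⬝ᵥ (r₂ ⨯₃ r₃)) ∧
      -- invariance under the cyclic permutation (s₁,s₂,s₃) → (s₂,s₃,s₁)
      (screwProdAt s₁ (screwComm s₃ s₂ r₃ r₂) r₁ (-(r₃ ⨯₃ r₂)) P =
        screwProdAt s₂ (screwComm s₁ s₃ r₁ r₃) r₂ (-(r₁ ⨯₃ r₃)) P) := by
  intro P
  refine ⟨screwProdAt_screwComm_add_screwProdAt_screwComm .., screwProdAt_screwComm ..,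
    h₁.dot_cross_cyclic_sum_eq h₂ h₃ P, ?_⟩
  rw [screwProdAt_screwComm, screwProdAt_screwComm]
  ring
end
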